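/- Let J be a set, let x_1, x_2, x_3 ∈ ℓ²(J) with ‖x_i‖ = 1 for i = 1, 2, 3, and let T_1, T_2, T_3 be the Varopoulos triple on H = ℂ ⊕ ℓ²(J) ⊕ ℂ. If the linear span of the six vectors x_1, x_2, x_3, x̄_1, x̄_2, x̄_3 is not dense in ℓ²(J) (equivalently, some nonzero vector of ℓ²(J) is orthogonal to all six), then (T_1, T_2, T_3) is not extremal. -/

import Mathlib

open ContinuousLinearMap in
/-- The block operator `X (h, m) = (T h + A m, B m)` on the Hilbert direct sum `H ⊕₂ M`. -/
noncomputable def blockOp {H M : Type*} [NormedAddCommGroup H] [InnerProductSpace ℂ H]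
    [NormedAddCommGroup M] [InnerProductSpace ℂ M]
    (T : H →L[ℂ] H) (A : M →L[ℂ] H) (B : M →L[ℂ] M) :
    WithLp 2 (H × M) →L[ℂ] WithLp 2 (H × M) :=
  ((WithLp.prodContinuousLinearEquiv 2 ℂ H M).symm : H × M →L[ℂ] WithLp 2 (H × M)) ∘L
    ((T ∘L fst ℂ H M + A ∘L snd ℂ H M).prod (B ∘L snd ℂ H M)) ∘L
    ((WithLp.prodContinuousLinearEquiv 2 ℂ H M) : WithLp 2 (H × M) →L[ℂ] H × M)

/-- A tuple of commuting contractions is extremal if every block extension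
`X_i (h, m) = (T_i h + A_i m, B_i m)` by commuting contractions has `A_i = 0` for all `i`. -/
def IsExtremal {n : ℕ} {H : Type*} [NormedAddCommGroup H] [InnerProductSpace ℂ H]
    [CompleteSpace H] (T : Fin n → H →L[ℂ] H) : Prop :=
  ∀ (M : Type*) [NormedAddCommGroup M] [InnerProductSpace ℂ M] [CompleteSpace M],
    ∀ (A : Fin n → M →L[ℂ] H) (B : Fin n → M →L[ℂ] M),
      (∀ i, ‖blockOp (T i) (A i) (B i)‖ ≤ 1) →
      (∀ i j, blockOp (T i) (A i) (B i) ∘L blockOp (T j) (A j) (B j)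
            = blockOp (T j) (A j) (B j) ∘L blockOp (T i) (A i) (B i)) →
      ∀ i, A i = 0

noncomputable section

/-- The Hilbert space `ℂ ⊕₂ L ⊕₂ ℂ` on which the Varopoulos triple acts. -/
abbrev VarSpace (L : Type*) [NormedAddCommGroup L] [InnerProductSpace ℂ L] : Type _ :=
  WithLp 2 (ℂ × WithLp 2 (L × ℂ))

variable {L : Type*} [NormedAddCommGroup L] [InnerProductSpace ℂ L]

/-- The identification of `VarSpace L` with `ℂ × L × ℂ` as a continuous linear equivalence. -/
def varEquiv (L : Type*) [NormedAddCommGroup L] [InnerProductSpace ℂ L] :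
    VarSpace L ≃L[ℂ] ℂ × L × ℂ :=
  (WithLp.prodContinuousLinearEquiv 2 ℂ ℂ (WithLp 2 (L × ℂ))).trans
    ((ContinuousLinearEquiv.refl ℂ ℂ).prodCongr (WithLp.prodContinuousLinearEquiv 2 ℂ L ℂ))

/-- The element `(c, v, d)` of `VarSpace L`. -/
def varMk (c : ℂ) (v : L) (d : ℂ) : VarSpace L := (varEquiv L).symm (c, v, d)

open ContinuousLinearMap in
/-- The Varopoulos operator `T (c, v, d) = (0, c • x, ⟪xbar, v⟫)` on `ℂ ⊕₂ L ⊕₂ ℂ`.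
With `xbar` the entrywise conjugate of `x`, the third coordinate is the bilinear
pairing `Σ_α x(α) v(α)`. -/
def varOp (x xbar : L) : VarSpace L →L[ℂ] VarSpace L :=
  ((varEquiv L).symm : ℂ × L × ℂ →L[ℂ] VarSpace L) ∘L
    ((0 : ℂ × L × ℂ →L[ℂ] ℂ).prod
      (((fst ℂ ℂ (L × ℂ)).smulRight x).prod
        ((innerSL ℂ xbar) ∘L (fst ℂ L ℂ) ∘L (snd ℂ ℂ (L × ℂ))))) ∘L
    ((varEquiv L) : VarSpace L →L[ℂ] ℂ × L × ℂ)

end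

/-!
Pick a unit vector `w` orthogonal to every `x_i` and `x̄_i`, and extend each `T_i` by the
one-dimensional space `M = ℂ` with `A_i m = (0, m w, 0)` and `B_i = 0`. Orthogonality to `x_i`
keeps the `X_i` contractive (Pythagoras in the middle coordinate), orthogonality to `x̄_i` gives
`T_j A_i = 0`, so `X_i X_j (h, m) = (T_i T_j h, 0)`; and `T_i T_j (c, v, d) = (0, 0, c Σ x_i x_j)`
is symmetric in `i, j` because the pairing is bilinear. Since `A_i ≠ 0`, the triple is not
extremal.
-/

lemma withLp_prod_ext {α β : Type*} {u v : WithLp 2 (α × β)} (h₁ : u.fst = v.fst)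
    (h₂ : u.snd = v.snd) : u = v :=
  WithLp.ofLp_injective 2 (Prod.ext h₁ h₂)

section BlockOperator

variable {H M : Type*} [NormedAddCommGroup H] [InnerProductSpace ℂ H]
  [NormedAddCommGroup M] [InnerProductSpace ℂ M]
  (T : H →L[ℂ] H) (A : M →L[ℂ] H) (B : M →L[ℂ] M)

@[simp]
lemma blockOp_fst (u : WithLp 2 (H × M)) : (blockOp T A B u).fst = T u.fst + A u.snd := rfl

lemma blockOp_comp_blockOp (T' : H →L[ℂ] H) (A' : M →L[ℂ] H) (B' : M →L[ℂ] M) :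
    blockOp T A B ∘L blockOp T' A' B' = blockOp (T ∘L T') (T ∘L A' + A ∘L B') (B ∘L B') := by
  ext1 u
  refine withLp_prod_ext ?_ rfl
  simp only [ContinuousLinearMap.comp_apply, blockOp_fst, map_add, add_apply]
  abel

lemma norm_blockOp_le_one (h : ∀ h m, ‖T h + A m‖ ^ 2 + ‖B m‖ ^ 2 ≤ ‖h‖ ^ 2 + ‖m‖ ^ 2) :
    ‖blockOp T A B‖ ≤ 1 := by
  refine ContinuousLinearMap.opNorm_le_bound _ zero_le_one fun u => ?_
  rw [one_mul, ← sq_le_sq₀ (norm_nonneg _) (norm_nonneg _), WithLp.prod_norm_sq_eq_of_L2,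
    WithLp.prod_norm_sq_eq_of_L2 u]
  exact h _ _

end BlockOperator

section Varopoulos

variable {L : Type*} [NormedAddCommGroup L] [InnerProductSpace ℂ L]

lemma exists_varMk_eq (u : VarSpace L) : ∃ c v d, varMk c v d = u :=
  ⟨_, _, _, (varEquiv L).symm_apply_apply u⟩

lemma varMk_add (c c' : ℂ) (v v' : L) (d d' : ℂ) :
    varMk c v d + varMk c' v' d' = varMk (c + c') (v + v') (d + d') :=
  (map_add (varEquiv L).symm (c, v, d) (c', v', d')).symm

lemma varMk_smul (a c : ℂ) (v : L) (d : ℂ) :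
    a • varMk c v d = varMk (a * c) (a • v) (a * d) :=
  (map_smul (varEquiv L).symm a (c, v, d)).symm

lemma varMk_zero : (varMk 0 0 0 : VarSpace L) = 0 := map_zero (varEquiv L).symm

lemma varMk_eq_zero_iff {c : ℂ} {v : L} {d : ℂ} :
    varMk c v d = 0 ↔ c = 0 ∧ v = 0 ∧ d = 0 := by
  rw [← varMk_zero, varMk, varMk, (varEquiv L).symm.injective.eq_iff, Prod.mk.injEq,
    Prod.mk.injEq]

lemma norm_varMk_sq (c : ℂ) (v : L) (d : ℂ) :
    ‖(varMk c v d : VarSpace L)‖ ^ 2 = ‖c‖ ^ 2 + ‖v‖ ^ 2 + ‖d‖ ^ 2 := by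
  rw [WithLp.prod_norm_sq_eq_of_L2, WithLp.prod_norm_sq_eq_of_L2, ← add_assoc]
  rfl

lemma varOp_varMk (x xbar : L) (c : ℂ) (v : L) (d : ℂ) :
    varOp x xbar (varMk c v d) = varMk 0 (c • x) (inner ℂ xbar v) := rfl

lemma varOp_comp_varOp_comm {x xbar y ybar : L} (h : inner ℂ xbar y = inner ℂ ybar x) :
    varOp x xbar ∘L varOp y ybar = varOp y ybar ∘L varOp x xbar := by
  ext1 u
  obtain ⟨c, v, d, rfl⟩ := exists_varMk_eq u
  simp only [ContinuousLinearMap.comp_apply, varOp_varMk, zero_smul, inner_smul_right, h]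

lemma varOp_comp_smulRight_varMk {M : Type*} [NormedAddCommGroup M] [InnerProductSpace ℂ M]
    {x xbar w : L} (h : inner ℂ xbar w = 0) (f : M →L[ℂ] ℂ) :
    varOp x xbar ∘L f.smulRight (varMk 0 w 0) = 0 := by
  ext1 m
  rw [ContinuousLinearMap.comp_apply, ContinuousLinearMap.smulRight_apply, map_smul,
    varOp_varMk, zero_smul, h, varMk_zero, smul_zero, zero_apply]

lemma norm_varOp_add_smul_varMk_sq_le {x xbar w : L} (hx : ‖x‖ ≤ 1) (hxbar : ‖xbar‖ ≤ 1)
    (hw : ‖w‖ ≤ 1) (hxw : inner ℂ x w = 0) (u : VarSpace L) (a : ℂ) :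
    ‖varOp x xbar u + a • varMk 0 w 0‖ ^ 2 ≤ ‖u‖ ^ 2 + ‖a‖ ^ 2 := by
  obtain ⟨c, v, d, rfl⟩ := exists_varMk_eq u
  have hcx : ‖c • x‖ ≤ ‖c‖ := by
    rw [norm_smul]; exact mul_le_of_le_one_right (norm_nonneg _) hx
  have haw : ‖a • w‖ ≤ ‖a‖ := by
    rw [norm_smul]; exact mul_le_of_le_one_right (norm_nonneg _) hw
  have hv : ‖inner ℂ xbar v‖ ≤ ‖v‖ :=
    (norm_inner_le_norm xbar v).trans (mul_le_of_le_one_left (norm_nonneg _) hxbar)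
  have hpyth : ‖c • x + a • w‖ ^ 2 = ‖c • x‖ ^ 2 + ‖a • w‖ ^ 2 := by
    simp only [sq]
    refine norm_add_sq_eq_norm_sq_add_norm_sq_of_inner_eq_zero (𝕜 := ℂ) _ _ ?_
    rw [inner_smul_left, inner_smul_right, hxw, mul_zero, mul_zero]
  rw [varOp_varMk, varMk_smul, varMk_add, norm_varMk_sq, norm_varMk_sq, hpyth]
  simp only [mul_zero, add_zero, norm_zero]
  nlinarith [pow_le_pow_left₀ (norm_nonneg _) hcx 2, pow_le_pow_left₀ (norm_nonneg _) haw 2,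
    pow_le_pow_left₀ (norm_nonneg _) hv 2, sq_nonneg ‖d‖]

theorem not_isExtremal_varOp [CompleteSpace L] {n : ℕ} [NeZero n] {x xbar : Fin n → L}
    (hx : ∀ i, ‖x i‖ ≤ 1) (hxbar : ∀ i, ‖xbar i‖ ≤ 1)
    (hsymm : ∀ i j, inner ℂ (xbar i) (x j) = inner ℂ (xbar j) (x i))
    {w : L} (hw : ‖w‖ = 1) (hxw : ∀ i, inner ℂ (x i) w = 0)
    (hxbarw : ∀ i, inner ℂ (xbar i) w = 0) :
    ¬ IsExtremal (fun i => varOp (x i) (xbar i)) := by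
  intro hext
  -- `EuclideanSpace ℂ PUnit` is a copy of `ℂ` in whatever universe `IsExtremal` quantifies over.
  let f := EuclideanSpace.proj (𝕜 := ℂ) PUnit.unit
  have hf : ‖f‖ ≤ 1 :=
    ContinuousLinearMap.opNorm_le_bound _ zero_le_one fun m => by
      rw [one_mul]; exact PiLp.norm_apply_le m _
  let A : EuclideanSpace ℂ PUnit →L[ℂ] VarSpace L := f.smulRight (varMk 0 w 0)
  have hA : A = 0 := by
    refine hext _ (fun _ => A) (fun _ => 0) (fun i => ?_) (fun i j => ?_) 0
    · refine norm_blockOp_le_one _ _ _ fun h m => ?_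
      calc ‖varOp (x i) (xbar i) h + A m‖ ^ 2 + ‖(0 : _ →L[ℂ] _) m‖ ^ 2
          ≤ ‖h‖ ^ 2 + ‖f m‖ ^ 2 := by
            simpa [A] using norm_varOp_add_smul_varMk_sq_le (hx i) (hxbar i) hw.le (hxw i) h (f m)
        _ ≤ ‖h‖ ^ 2 + ‖m‖ ^ 2 := by
            gcongr; exact f.le_of_opNorm_le hf m |>.trans_eq (one_mul _)
    · rw [blockOp_comp_blockOp, blockOp_comp_blockOp, varOp_comp_varOp_comm (hsymm i j),
        varOp_comp_smulRight_varMk (hxbarw i), varOp_comp_smulRight_varMk (hxbarw j)]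
  have hAe : A (EuclideanSpace.single PUnit.unit 1) = varMk 0 w 0 := by
    simp [A, f]
  rw [hA, zero_apply, eq_comm, varMk_eq_zero_iff] at hAe
  simp [hAe.2.1] at hw

end Varopoulos

lemma lp.inner_star_left_comm {J : Type*} (f g : lp (fun _ : J => ℂ) 2) :
    inner ℂ (star f) g = inner ℂ (star g) f := by
  simp only [lp.inner_eq_tsum, lp.star_apply, RCLike.inner_apply, star_star, starRingEnd_apply,
    mul_comm]

/-- If the span of `x_1, x_2, x_3, x̄_1, x̄_2, x̄_3` is not dense in `ℓ²(J)`, then the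
Varopoulos triple is not extremal. -/
theorem statement11 {J : Type*} (x : Fin 3 → lp (fun _ : J => ℂ) 2)
    (hx : ∀ i, ‖x i‖ = 1)
    (hspan : (Submodule.span ℂ
        ({x 0, x 1, x 2, star (x 0), star (x 1), star (x 2)} :
          Set (lp (fun _ : J => ℂ) 2))).topologicalClosure ≠ ⊤) :
    ¬ IsExtremal (fun i : Fin 3 => varOp (x i) (star (x i))) := by
  set K := Submodule.span ℂ
    ({x 0, x 1, x 2, star (x 0), star (x 1), star (x 2)} : Set (lp (fun _ : J => ℂ) 2))
  rw [Ne, Submodule.topologicalClosure_eq_top_iff] at hspan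
  obtain ⟨y, hyK, hy0⟩ := (Submodule.ne_bot_iff _).mp hspan
  set w := (‖y‖ : ℂ)⁻¹ • y
  have hwK : w ∈ Kᗮ := Kᗮ.smul_mem _ hyK
  have horth : ∀ z ∈ ({x 0, x 1, x 2, star (x 0), star (x 1), star (x 2)} :
      Set (lp (fun _ : J => ℂ) 2)), inner ℂ z w = 0 :=
    fun z hz => Submodule.inner_right_of_mem_orthogonal (Submodule.subset_span hz) hwK
  refine not_isExtremal_varOp (fun i => (hx i).le) (fun i => (norm_star (x i)).trans_le (hx i).le)
    (fun i j => lp.inner_star_left_comm _ _) (norm_smul_inv_norm hy0) (fun i => horth _ ?_)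
    (fun i => horth _ ?_)
  · fin_cases i <;> simp
  · fin_cases i <;> simp
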